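/- Let n ∈ ℕ and define quadratic forms qᵢ = (Xᵢ + Y)² − 2Y² ∈ ℝ[X₁,…,Xₙ,Y]₂ for i = 1,…,n. Then there exists ε > 0 such that for all homogeneous quadratic forms p₁,…,pₙ ∈ ℝ[X₁,…,Xₙ,Y]₂ with every coefficient of pᵢ − qᵢ of absolute value less than ε (for each i = 1,…,n), there exists a nonzero point z ∈ ℝ^{n+1} with p₁(z) = ⋯ = pₙ(z) = 0. -/

import Mathlib

/-!
Dehomogenize at `Y = 1` and shift by one: at the point `(u - 1, 1)` the form `qᵢ` takes the value
`uᵢ² - 2`, which vanishes at `u = (√2, …, √2)` with derivative `2√2 • id`. A quadratic form on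
`ℝ^N` whose coefficients are bounded by `ε` varies by at most `N² ε (‖z‖ + ‖w‖) ‖z - w‖` (sup norm)
between `z` and `w`, so for small `ε` the perturbations `pᵢ - qᵢ` are `1`-Lipschitz and at most
`1/10` in size on the ball of radius `1/10` around that point. The map `u ↦ (uᵢ² - 2 + (pᵢ - qᵢ))ᵢ`
then approximates `2√2 • id` on this ball with constant `6/5 < 2√2`, and the quantitative inverse
function theorem puts `0` in its image.
-/

open MvPolynomial Finset Metric

section QuadraticForms

variable {σ : Type*}

theorem Finsupp.exists_eq_single_add_single_of_degree_eq_two {d : σ →₀ ℕ} (hd : d.degree = 2) :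
    ∃ j k, d = single j 1 + single k 1 := by
  classical
  have hcard : Multiset.card (toMultiset d) = 2 := by
    rw [card_toMultiset]; exact hd
  obtain ⟨j, k, hjk⟩ := Multiset.card_eq_two.mp hcard
  refine ⟨j, k, ?_⟩
  rw [toMultiset_eq_iff.mp hjk, Multiset.insert_eq_cons, ← Multiset.singleton_add,
    Multiset.toFinsupp_add, Multiset.toFinsupp_singleton, Multiset.toFinsupp_singleton]

theorem Finsupp.prod_pow_single_add_single {M : Type*} [CommMonoid M] (z : σ → M) (j k : σ) :
    (single j 1 + single k 1).prod (fun i e => z i ^ e) = z j * z k := by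
  rw [prod_add_index' (fun _ => pow_zero _) (fun _ _ _ => pow_add _ _ _),
    prod_single_index (h := fun i e => z i ^ e) (pow_zero (z j)),
    prod_single_index (h := fun i e => z i ^ e) (pow_zero (z k)), pow_one, pow_one]

variable {R : Type*} [CommSemiring R] {P : MvPolynomial σ R}

theorem MvPolynomial.IsHomogeneous.degree_eq_of_mem_support {m : ℕ} (hP : P.IsHomogeneous m)
    {d : σ →₀ ℕ} (hd : d ∈ P.support) : d.degree = m := by
  by_contra h
  exact mem_support_iff.mp hd (hP.coeff_eq_zero h)

theorem MvPolynomial.IsHomogeneous.card_support_le_of_two [Fintype σ] (hP : P.IsHomogeneous 2) :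
    #P.support ≤ Fintype.card σ ^ 2 := by
  classical
  have hsub : P.support ⊆ univ.image fun jk : σ × σ => Finsupp.single jk.1 1 + .single jk.2 1 := by
    intro d hd
    obtain ⟨j, k, rfl⟩ :=
      Finsupp.exists_eq_single_add_single_of_degree_eq_two (hP.degree_eq_of_mem_support hd)
    exact mem_image_of_mem _ (mem_univ (j, k))
  calc #P.support ≤ #(univ : Finset (σ × σ)) := (card_le_card hsub).trans card_image_le
    _ = Fintype.card σ ^ 2 := by rw [card_univ, Fintype.card_prod, sq]

theorem MvPolynomial.IsHomogeneous.abs_eval_sub_eval_le [Fintype σ] {P : MvPolynomial σ ℝ}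
    (hP : P.IsHomogeneous 2) {ε : ℝ} (hc : ∀ d, |coeff d P| ≤ ε) (z w : σ → ℝ) :
    |eval z P - eval w P| ≤ Fintype.card σ ^ 2 * (ε * (‖z‖ + ‖w‖) * ‖z - w‖) := by
  have hε : 0 ≤ ε := (abs_nonneg _).trans (hc 0)
  have hcoord : ∀ (v : σ → ℝ) i, |v i| ≤ ‖v‖ := fun v i => norm_le_pi_norm v i
  have hterm : ∀ d ∈ P.support, |coeff d P * d.prod (fun i e => z i ^ e)
      - coeff d P * d.prod (fun i e => w i ^ e)| ≤ ε * (‖z‖ + ‖w‖) * ‖z - w‖ := by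
    intro d hd
    obtain ⟨j, k, rfl⟩ :=
      Finsupp.exists_eq_single_add_single_of_degree_eq_two (hP.degree_eq_of_mem_support hd)
    rw [Finsupp.prod_pow_single_add_single, Finsupp.prod_pow_single_add_single, ← mul_sub,
      abs_mul, mul_assoc]
    refine mul_le_mul (hc _) ?_ (abs_nonneg _) hε
    calc |z j * z k - w j * w k| = |z j * (z k - w k) + (z j - w j) * w k| := by ring_nf
      _ ≤ |z j| * |z k - w k| + |z j - w j| * |w k| := by
        rw [← abs_mul, ← abs_mul]; exact abs_add_le _ _
      _ ≤ ‖z‖ * ‖z - w‖ + ‖z - w‖ * ‖w‖ := by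
        gcongr <;> first | exact hcoord _ _ | exact hcoord (z - w) _
      _ = (‖z‖ + ‖w‖) * ‖z - w‖ := by ring
  calc |eval z P - eval w P|
      = |∑ d ∈ P.support, (coeff d P * d.prod (fun i e => z i ^ e)
          - coeff d P * d.prod (fun i e => w i ^ e))| := by
        rw [eval_eq, eval_eq, sum_sub_distrib]; rfl
    _ ≤ ∑ d ∈ P.support, |coeff d P * d.prod (fun i e => z i ^ e)
          - coeff d P * d.prod (fun i e => w i ^ e)| := abs_sum_le_sum_abs _ _
    _ ≤ #P.support • (ε * (‖z‖ + ‖w‖) * ‖z - w‖) := sum_le_card_nsmul _ _ _ hterm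
    _ ≤ Fintype.card σ ^ 2 * (ε * (‖z‖ + ‖w‖) * ‖z - w‖) := by
        rw [nsmul_eq_mul]
        gcongr
        exact_mod_cast hP.card_support_le_of_two

theorem MvPolynomial.IsHomogeneous.abs_eval_le [Fintype σ] {P : MvPolynomial σ ℝ}
    (hP : P.IsHomogeneous 2) {ε : ℝ} (hc : ∀ d, |coeff d P| ≤ ε) (z : σ → ℝ) :
    |eval z P| ≤ Fintype.card σ ^ 2 * (ε * ‖z‖ ^ 2) := by
  have h0 : eval 0 P = 0 := by
    rw [eval_zero, constantCoeff_eq, hP.coeff_eq_zero (by simp)]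
  simpa only [h0, sub_zero, norm_zero, add_zero, sq, mul_assoc] using
    hP.abs_eval_sub_eval_le hc z 0

end QuadraticForms

section Snoc

variable {E : Type*} {m : ℕ}

theorem Fin.snoc_sub_snoc [Sub E] (x y : Fin m → E) (a b : E) :
    (Fin.snoc x a : Fin (m + 1) → E) - Fin.snoc y b = Fin.snoc (x - y) (a - b) := by
  funext i
  refine Fin.lastCases ?_ (fun j => ?_) i <;> simp

theorem Fin.norm_snoc_le [SeminormedAddCommGroup E] (x : Fin m → E) (a : E) :
    ‖(Fin.snoc x a : Fin (m + 1) → E)‖ ≤ max ‖x‖ ‖a‖ := by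
  refine (pi_norm_le_iff_of_nonneg (by positivity)).mpr fun i => ?_
  refine Fin.lastCases ?_ (fun j => ?_) i
  · simp
  · simpa using Or.inl (norm_le_pi_norm x j)

end Snoc

noncomputable def ContinuousLinearMap.nonlinearRightInverseSmulId {𝕜 E : Type*}
    [NontriviallyNormedField 𝕜] [NormedAddCommGroup E] [NormedSpace 𝕜 E] {c : 𝕜} (hc : c ≠ 0) :
    (c • ContinuousLinearMap.id 𝕜 E).NonlinearRightInverse where
  toFun y := c⁻¹ • y
  nnnorm := ‖c‖₊⁻¹
  bound' y := by rw [norm_smul, norm_inv, NNReal.coe_inv, coe_nnnorm]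
  right_inv' y := by simp [smul_smul, hc]

theorem ApproximatesLinearOn.add_lipschitzOnWith {𝕜 E F : Type*} [NontriviallyNormedField 𝕜]
    [NormedAddCommGroup E] [NormedSpace 𝕜 E] [NormedAddCommGroup F] [NormedSpace 𝕜 F]
    {f g : E → F} {f' : E →L[𝕜] F} {s : Set E} {c c' : NNReal}
    (hf : ApproximatesLinearOn f f' s c) (hg : LipschitzOnWith c' g s) :
    ApproximatesLinearOn (f + g) f' s (c + c') := by
  rw [ApproximatesLinearOn.approximatesLinearOn_iff_lipschitzOnWith, add_sub_right_comm]
  exact hf.lipschitzOnWith.add hg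

theorem approximatesLinearOn_sq_sub {ι : Type*} [Fintype ι] (b c : ℝ) (r : NNReal) :
    ApproximatesLinearOn (fun u : ι → ℝ => fun i => u i ^ 2 - b)
      ((2 * c) • ContinuousLinearMap.id ℝ (ι → ℝ)) (closedBall (fun _ => c) r) (2 * r) := by
  intro u hu v hv
  have hcoord : ∀ w ∈ closedBall (fun _ : ι => c) r, ∀ i, |w i - c| ≤ r := fun w hw i =>
    (norm_le_pi_norm (w - fun _ => c) i).trans (mem_closedBall_iff_norm.mp hw)
  refine (pi_norm_le_iff_of_nonneg (by positivity)).mpr fun i => ?_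
  calc ‖(u i ^ 2 - b - (v i ^ 2 - b)) - 2 * c * (u i - v i)‖
        = |u i - v i| * |(u i - c) + (v i - c)| := by
        rw [Real.norm_eq_abs, ← abs_mul]; ring_nf
    _ ≤ ‖u - v‖ * (2 * r) := by
        refine mul_le_mul (norm_le_pi_norm (u - v) i) ?_ (abs_nonneg _) (norm_nonneg _)
        linarith [abs_add_le (u i - c) (v i - c), hcoord u hu i, hcoord v hv i]
    _ = ↑(2 * r) * ‖u - v‖ := by push_cast; ring

theorem exists_sq_sub_two_add_eq_zero {ι : Type*} [Fintype ι] {g : (ι → ℝ) → ι → ℝ}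
    (hg : LipschitzOnWith 1 g (closedBall (fun _ => √2) (1 / 10)))
    (hg₀ : ‖g fun _ => √2‖ ≤ 1 / 10) :
    ∃ u ∈ closedBall (fun _ => √2) (1 / 10), ∀ i, u i ^ 2 - 2 + g u i = 0 := by
  have hsqrt : (1.4 : ℝ) ≤ √2 := Real.le_sqrt_of_sq_le (by norm_num)
  have hA : (2 * √2 : ℝ) ≠ 0 := by positivity
  let rightInv := ContinuousLinearMap.nonlinearRightInverseSmulId (E := ι → ℝ) hA
  have happrox := (approximatesLinearOn_sq_sub (ι := ι) 2 √2 (1 / 10)).add_lipschitzOnWith hg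
  have h0 : (0 : ι → ℝ) ∈ closedBall (fun i => (√2) ^ 2 - 2 + g (fun _ => √2) i)
      (((rightInv.nnnorm : ℝ)⁻¹ - ↑(2 * (1 / 10) + 1 : NNReal)) * (1 / 10)) := by
    simp only [mem_closedBall, dist_zero_left, Real.sq_sqrt zero_le_two, sub_self, zero_add,
      rightInv, ContinuousLinearMap.nonlinearRightInverseSmulId, NNReal.coe_inv, coe_nnnorm,
      inv_inv,
      Real.norm_eq_abs, abs_of_pos (by positivity : (0 : ℝ) < 2 * √2)]
    push_cast
    linarith
  obtain ⟨u, hu, hzero⟩ := happrox.surjOn_closedBall_of_nonlinearRightInverse rightInv (by norm_num)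
    subset_rfl h0
  exact ⟨u, hu, fun i => congrFun hzero i⟩

section Chart

variable {m : ℕ}

def affineChart (u : Fin m → ℝ) : Fin (m + 1) → ℝ := Fin.snoc (fun i => u i - 1) 1

theorem affineChart_ne_zero (u : Fin m → ℝ) : affineChart u ≠ 0 := fun h => by
  simpa [affineChart] using congrFun h (Fin.last m)

theorem norm_affineChart_sub_le (u v : Fin m → ℝ) : ‖affineChart u - affineChart v‖ ≤ ‖u - v‖ := by
  have hsub : ((fun i => u i - 1) - fun i => v i - 1) = u - v := by funext i; simp
  rw [affineChart, affineChart, Fin.snoc_sub_snoc, hsub, sub_self]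
  exact (Fin.norm_snoc_le _ _).trans (max_le le_rfl (by simp))

theorem norm_affineChart_le_one {u : Fin m → ℝ} (hu : u ∈ closedBall (fun _ => √2) (1 / 10)) :
    ‖affineChart u‖ ≤ 1 := by
  have hsqrt : √2 ≤ 1.5 := Real.sqrt_le_iff.mpr ⟨by norm_num, by norm_num⟩
  have hsqrt' : 1 ≤ √2 := Real.le_sqrt_of_sq_le (by norm_num)
  refine (Fin.norm_snoc_le _ _).trans (max_le ?_ (by simp))
  refine (pi_norm_le_iff_of_nonneg zero_le_one).mpr fun i => ?_
  have hi : |u i - √2| ≤ 1 / 10 :=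
    (norm_le_pi_norm (u - fun _ => √2) i).trans (mem_closedBall_iff_norm.mp hu)
  rw [Real.norm_eq_abs, abs_le]
  rw [abs_le] at hi
  constructor <;> linarith [hi.1, hi.2]

theorem lipschitzOnWith_eval_affineChart {ι : Type*} [Fintype ι]
    {e : ι → MvPolynomial (Fin (m + 1)) ℝ} (he : ∀ i, (e i).IsHomogeneous 2) {ε : ℝ}
    (hc : ∀ i d, |coeff d (e i)| ≤ ε) (hε : 2 * (m + 1) ^ 2 * ε ≤ 1) :
    LipschitzOnWith 1 (fun u i => eval (affineChart u) (e i))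
      (closedBall (fun _ => √2) (1 / 10)) := by
  rw [lipschitzOnWith_iff_norm_sub_le]
  intro u hu v hv
  refine (pi_norm_le_iff_of_nonneg (by positivity)).mpr fun i => ?_
  have hε₀ : 0 ≤ ε := (abs_nonneg _).trans (hc i 0)
  calc |eval (affineChart u) (e i) - eval (affineChart v) (e i)|
      ≤ (m + 1) ^ 2 *
          (ε * (‖affineChart u‖ + ‖affineChart v‖) * ‖affineChart u - affineChart v‖) := by
        simpa using (he i).abs_eval_sub_eval_le (hc i) (affineChart u) (affineChart v)
    _ ≤ (m + 1) ^ 2 * (ε * (1 + 1) * ‖u - v‖) := by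
        gcongr
        exacts [norm_affineChart_le_one hu, norm_affineChart_le_one hv, norm_affineChart_sub_le u v]
    _ ≤ ↑(1 : NNReal) * ‖u - v‖ := by
        rw [NNReal.coe_one]; nlinarith [norm_nonneg (u - v)]

theorem abs_eval_affineChart_le {P : MvPolynomial (Fin (m + 1)) ℝ} (hP : P.IsHomogeneous 2)
    {ε : ℝ} (hc : ∀ d, |coeff d P| ≤ ε) {u : Fin m → ℝ}
    (hu : u ∈ closedBall (fun _ => √2) (1 / 10)) :
    |eval (affineChart u) P| ≤ (m + 1) ^ 2 * ε := by
  have hε₀ : 0 ≤ ε := (abs_nonneg _).trans (hc 0)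
  calc |eval (affineChart u) P| ≤ (m + 1) ^ 2 * (ε * ‖affineChart u‖ ^ 2) := by
        simpa using hP.abs_eval_le hc (affineChart u)
    _ ≤ (m + 1) ^ 2 * (ε * 1 ^ 2) := by
        gcongr
        exact norm_affineChart_le_one hu
    _ = (m + 1) ^ 2 * ε := by ring

end Chart

noncomputable def modelForm (n : ℕ) (i : Fin n) : MvPolynomial (Fin (n + 1)) ℝ :=
  (X i.castSucc + X (Fin.last n)) ^ 2 - 2 * X (Fin.last n) ^ 2

theorem isHomogeneous_modelForm {n : ℕ} (i : Fin n) : (modelForm n i).IsHomogeneous 2 := by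
  have hsum := ((isHomogeneous_X ℝ i.castSucc).add (isHomogeneous_X ℝ (Fin.last n))).pow 2
  have hlast := isHomogeneous_C_mul_X_pow (2 : ℝ) (Fin.last n) 2
  rw [map_ofNat] at hlast
  exact hsum.sub hlast

theorem eval_affineChart_modelForm {n : ℕ} (u : Fin n → ℝ) (i : Fin n) :
    eval (affineChart u) (modelForm n i) = u i ^ 2 - 2 := by
  simp [modelForm, affineChart]

theorem stmt12 (n : ℕ) :
    ∃ ε : ℝ, 0 < ε ∧
      ∀ p : Fin n → MvPolynomial (Fin (n + 1)) ℝ,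
        (∀ i, (p i).IsHomogeneous 2) →
        (∀ (i : Fin n) (d : Fin (n + 1) →₀ ℕ),
          |MvPolynomial.coeff d
            (p i - ((X i.castSucc + X (Fin.last n)) ^ 2 - 2 * X (Fin.last n) ^ 2))| < ε) →
        ∃ z : Fin (n + 1) → ℝ, z ≠ 0 ∧ ∀ i, eval z (p i) = 0 := by
  refine ⟨1 / (10 * (n + 1) ^ 2), by positivity, fun p hp hcoef => ?_⟩
  set e : Fin n → MvPolynomial (Fin (n + 1)) ℝ := fun i => p i - modelForm n i
  have he i : (e i).IsHomogeneous 2 := (hp i).sub (isHomogeneous_modelForm i)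
  have hce i d : |coeff d (e i)| ≤ 1 / (10 * (n + 1) ^ 2) := (hcoef i d).le
  have hε : (n + 1 : ℝ) ^ 2 * (1 / (10 * (n + 1) ^ 2)) = 1 / 10 := by field_simp
  obtain ⟨u, -, hu⟩ := exists_sq_sub_two_add_eq_zero
    (lipschitzOnWith_eval_affineChart he hce (by linarith))
    ((pi_norm_le_iff_of_nonneg (by norm_num)).mpr fun i =>
      (abs_eval_affineChart_le (he i) (hce i) (mem_closedBall_self (by norm_num))).trans hε.le)
  refine ⟨affineChart u, affineChart_ne_zero u, fun i => ?_⟩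
  rw [show p i = modelForm n i + e i by simp [e], map_add, eval_affineChart_modelForm]
  exact hu i
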